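/- arXiv:2404.04781 — 3 statements merged into one kernel-verified Lean document; each statement's English description precedes it below -/
import Mathlib

section
/- Let α > β > 0 and V ≥ 0. Suppose F : [0,∞) → [0,∞) is differentiable and satisfies F'(t) ≤ -α F(t) + β · sup_{0 ≤ s ≤ t} F(s) + V for all t ≥ 0. Then sup_{t ≥ 0} F(t) ≤ max( (V + β F(0))/(α - β), F(0) ). -/
theorem stmt9 (α β V : ℝ) (hβ : 0 < β) (hαβ : β < α) (hV : 0 ≤ V)
    (F F' : ℝ → ℝ) (hFpos : ∀ t, 0 ≤ t → 0 ≤ F t)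
    (hdiff : ∀ t, 0 ≤ t → HasDerivAt F (F' t) t)
    (hineq : ∀ t, 0 ≤ t → F' t ≤ -α * F t + β * sSup (F '' Set.Icc 0 t) + V) :
    ∀ t, 0 ≤ t → F t ≤ max ((V + β * F 0) / (α - β)) (F 0) := by
  intro t ht
  set M := max ((V + β * F 0) / (α - β)) (F 0) with hM
  have hab : 0 < α - β := by linarith
  have hF0M : F 0 ≤ M := le_max_right _ _
  have hVM : V ≤ (α - β) * M := by
    have h1 : (V + β * F 0) / (α - β) ≤ M := le_max_left _ _
    have h2 := (div_le_iff₀ hab).mp h1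
    nlinarith [hFpos 0 le_rfl, hβ.le]
  by_contra hcon
  push_neg at hcon
  set ε := F t - M with hε
  have hεpos : 0 < ε := by simp only [hε]; linarith
  set S := {s : ℝ | s ∈ Set.Icc 0 t ∧ M + ε ≤ F s} with hSdef
  have htS : t ∈ S := ⟨⟨ht, le_rfl⟩, by simp [hε]⟩
  have hScl : IsClosed S := by
    have hcontOn : ContinuousOn F (Set.Icc 0 t) := fun s hs =>
      ((hdiff s hs.1).continuousAt).continuousWithinAt
    have : S = Set.Icc 0 t ∩ F ⁻¹' Set.Ici (M + ε) := by
      ext s; simp [hSdef, Set.mem_preimage, and_comm]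
    rw [this]
    exact hcontOn.preimage_isClosed_of_isClosed isClosed_Icc isClosed_Ici
  have hSbdd : BddBelow S := ⟨0, fun s hs => hs.1.1⟩
  set t₀ := sInf S with ht₀def
  have ht₀S : t₀ ∈ S := hScl.csInf_mem ⟨t, htS⟩ hSbdd
  have ht₀0 : 0 < t₀ := by
    rcases lt_or_eq_of_le ht₀S.1.1 with h | h
    · exact h
    · exfalso; have := ht₀S.2; rw [← h] at this; linarith
  have hlt : ∀ s, 0 ≤ s → s < t₀ → F s < M + ε := by
    intro s hs0 hst
    by_contra h
    push_neg at h
    have hsS : s ∈ S := ⟨⟨hs0, le_trans hst.le ht₀S.1.2⟩, h⟩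
    exact absurd (csInf_le hSbdd hsS) (not_le.mpr hst)
  -- F t₀ = M + ε
  have hcontAt : ContinuousAt F t₀ := (hdiff t₀ ht₀S.1.1).continuousAt
  have hFt₀le : F t₀ ≤ M + ε := by
    have hne : (nhdsWithin t₀ (Set.Iio t₀)).NeBot := nhdsLT_neBot t₀
    have htend : Filter.Tendsto F (nhdsWithin t₀ (Set.Iio t₀)) (nhds (F t₀)) :=
      hcontAt.continuousWithinAt.tendsto
    have hev : ∀ᶠ s in nhdsWithin t₀ (Set.Iio t₀), F s ≤ M + ε := by
      have hIoo : Set.Ioo 0 t₀ ∈ nhdsWithin t₀ (Set.Iio t₀) :=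
        Ioo_mem_nhdsLT_of_mem ⟨ht₀0, le_rfl⟩
      filter_upwards [hIoo] with s hs
      exact (hlt s hs.1.le hs.2).le
    exact le_of_tendsto htend hev
  have hFt₀ : F t₀ = M + ε := le_antisymm hFt₀le ht₀S.2
  -- sup bound
  have hsup : sSup (F '' Set.Icc 0 t₀) ≤ M + ε := by
    apply csSup_le
    · exact (Set.nonempty_Icc.mpr ht₀S.1.1).image F
    · rintro y ⟨s, hs, rfl⟩
      rcases lt_or_eq_of_le hs.2 with h | h
      · exact (hlt s hs.1 h).le
      · rw [h, hFt₀]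
  -- derivative negative
  have hderiv_neg : F' t₀ < 0 := by
    have h1 := hineq t₀ ht₀S.1.1
    have h2 : -α * F t₀ + β * sSup (F '' Set.Icc 0 t₀) + V ≤
        -α * (M + ε) + β * (M + ε) + V := by
      rw [hFt₀]
      have := mul_le_mul_of_nonneg_left hsup hβ.le
      linarith
    nlinarith
  -- slope argument
  have hslope : Filter.Tendsto (slope F t₀) (nhdsWithin t₀ {t₀}ᶜ) (nhds (F' t₀)) :=
    hasDerivAt_iff_tendsto_slope.mp (hdiff t₀ ht₀S.1.1)
  have hslope' : Filter.Tendsto (slope F t₀) (nhdsWithin t₀ (Set.Iio t₀)) (nhds (F' t₀)) :=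
    hslope.mono_left (nhdsWithin_mono t₀ (fun x hx => ne_of_lt hx))
  have hev1 : ∀ᶠ s in nhdsWithin t₀ (Set.Iio t₀), slope F t₀ s < 0 :=
    hslope'.eventually_lt_const hderiv_neg
  have hev2 : Set.Ioo 0 t₀ ∈ nhdsWithin t₀ (Set.Iio t₀) :=
    Ioo_mem_nhdsLT_of_mem ⟨ht₀0, le_rfl⟩
  have hne : (nhdsWithin t₀ (Set.Iio t₀)).NeBot := nhdsLT_neBot t₀
  obtain ⟨s, hsl, hs⟩ := (hev1.and (Filter.eventually_mem_set.mpr hev2)).exists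
  have hslopeval : slope F t₀ s = (F s - F t₀) / (s - t₀) := by
    rw [slope_def_field]
  rw [hslopeval] at hsl
  have hden : s - t₀ < 0 := by linarith [hs.2]
  have hnum : 0 < F s - F t₀ := by
    rcases div_neg_iff.mp hsl with ⟨h1, h2⟩ | ⟨h1, h2⟩
    · exact h1
    · linarith
  have := hlt s hs.1.le hs.2
  rw [hFt₀] at hnum
  linarith
end

section
/- Let α > β > 0 and V ≥ 0. Suppose F : [0,∞) → [0,∞) is differentiable, F(0) = 0, and F'(t) ≤ -α F(t) + β · sup_{0 ≤ s ≤ t} F(s) + V for all t ≥ 0. Then sup_{t ≥ 0} F(t) ≤ V/(α - β). -/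
open scoped Topology

theorem stmt10 (α β V : ℝ) (hβ : 0 < β) (hαβ : β < α) (hV : 0 ≤ V)
    (F F' : ℝ → ℝ) (hFpos : ∀ t, 0 ≤ t → 0 ≤ F t) (hF0 : F 0 = 0)
    (hdiff : ∀ t, 0 ≤ t → HasDerivAt F (F' t) t)
    (hineq : ∀ t, 0 ≤ t → F' t ≤ -α * F t + β * sSup (F '' Set.Icc 0 t) + V) :
    ∀ t, 0 ≤ t → F t ≤ V / (α - β) := by
  have hab : 0 < α - β := by linarith
  have hM : 0 ≤ V / (α - β) := div_nonneg hV hab.le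
  suffices h : ∀ K, V / (α - β) < K → ∀ t, 0 ≤ t → F t ≤ K by
    intro t ht
    by_contra hc
    push_neg at hc
    have := h ((F t + V / (α - β)) / 2) (by linarith) t ht
    linarith
  intro K hK t ht
  by_contra hc
  push_neg at hc
  have hK0 : 0 < K := lt_of_le_of_lt hM hK
  have hVK : V < (α - β) * K := by
    have := (div_lt_iff₀ hab).mp hK
    linarith
  set S : Set ℝ := Set.Icc 0 t ∩ F ⁻¹' Set.Ici K with hSdef
  have hne : S.Nonempty := ⟨t, ⟨ht, le_refl t⟩, hc.le⟩
  have hcont : ContinuousOn F (Set.Icc 0 t) := fun s hs =>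
    ((hdiff s hs.1).continuousAt).continuousWithinAt
  have hScl : IsClosed S :=
    hcont.preimage_isClosed_of_isClosed isClosed_Icc isClosed_Ici
  have hbdd : BddBelow S := ⟨0, fun s hs => hs.1.1⟩
  set t₀ := sInf S with ht₀def
  have ht₀S : t₀ ∈ S := hScl.csInf_mem hne hbdd
  obtain ⟨⟨ht₀0, ht₀t⟩, ht₀K⟩ := ht₀S
  have ht₀K : K ≤ F t₀ := ht₀K
  have ht₀pos : 0 < t₀ := by
    rcases lt_or_eq_of_le ht₀0 with h | h
    · exact h
    · exfalso; rw [← h, hF0] at ht₀K; linarith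
  have hlt : ∀ s, 0 ≤ s → s < t₀ → F s < K := by
    intro s hs0 hst₀
    by_contra hge
    push_neg at hge
    have : t₀ ≤ s := csInf_le hbdd ⟨⟨hs0, hst₀.le.trans ht₀t⟩, hge⟩
    linarith
  -- sup bound
  have hsup : sSup (F '' Set.Icc 0 t₀) ≤ F t₀ := by
    refine csSup_le ⟨F t₀, ⟨t₀, ⟨ht₀0, le_refl _⟩, rfl⟩⟩ ?_
    rintro x ⟨s, ⟨hs0, hst₀⟩, rfl⟩
    rcases lt_or_eq_of_le hst₀ with h | h
    · exact (hlt s hs0 h).le.trans ht₀K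
    · rw [h]
  have hd := hdiff t₀ ht₀0
  have hF'neg : F' t₀ < 0 := by
    have h1 := hineq t₀ ht₀0
    have h2 : β * sSup (F '' Set.Icc 0 t₀) ≤ β * F t₀ :=
      mul_le_mul_of_nonneg_left hsup hβ.le
    have h3 : -α * F t₀ + β * F t₀ ≤ -(α - β) * K := by
      have : (α - β) * K ≤ (α - β) * F t₀ := mul_le_mul_of_nonneg_left ht₀K hab.le
      nlinarith
    have : F' t₀ ≤ -(α - β) * K + V := by linarith
    nlinarith
  -- contradiction from left slope
  have hslope : Filter.Tendsto (slope F t₀) (𝓝[<] t₀) (𝓝 (F' t₀)) :=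
    (hasDerivAt_iff_tendsto_slope.mp hd).mono_left
      (nhdsWithin_mono t₀ (fun x hx => ne_of_lt hx))
  have hev1 : ∀ᶠ s in 𝓝[<] t₀, slope F t₀ s < 0 :=
    hslope.eventually_lt_const hF'neg
  have hev2 : Set.Ioo 0 t₀ ∈ 𝓝[<] t₀ := Ioo_mem_nhdsLT_of_mem ⟨ht₀pos, le_refl _⟩
  obtain ⟨s, hs1, hs2⟩ := (hev1.and hev2).exists
  rw [slope_def_field] at hs1
  have hden : s - t₀ < 0 := by linarith [hs2.2]
  have hnum : 0 < F s - F t₀ := by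
    rcases div_neg_iff.mp hs1 with ⟨h1, _⟩ | ⟨_, h2⟩
    · exact h1
    · linarith
  have := hlt s hs2.1.le hs2.2
  linarith
end

section
/- Let α > β > 0, V ≥ 0, h > 0 with αh < 1, and let (a_n)_{n≥0} be a sequence of nonnegative reals satisfying a_{n+1} ≤ (1 - αh) a_n + βh · max_{0 ≤ i ≤ n} a_i + V h for all n ≥ 0. Then sup_{n ≥ 0} a_n ≤ max( (V + β a₀)/(α - β), a₀ ). -/
/-!
The bound `M` is invariant under the scheme: if all past values are at most `M`, the next one is
at most `M - (α - β) h M + V h`, and the choice of `M` guarantees `V ≤ (α - β) M`.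
-/

lemma le_sub_mul_max_div_sub {α β V a₀ : ℝ} (hβ : 0 ≤ β) (hαβ : β < α) (ha₀ : 0 ≤ a₀) :
    V ≤ (α - β) * max ((V + β * a₀) / (α - β)) a₀ := by
  have hpos : 0 < α - β := sub_pos.mpr hαβ
  calc V ≤ V + β * a₀ := le_add_of_nonneg_right (mul_nonneg hβ ha₀)
    _ = (α - β) * ((V + β * a₀) / (α - β)) := (mul_div_cancel₀ _ hpos.ne').symm
    _ ≤ (α - β) * max ((V + β * a₀) / (α - β)) a₀ :=
        mul_le_mul_of_nonneg_left (le_max_left _ _) hpos.le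

lemma euler_step_le_of_le {α β V h x S M : ℝ} (hβ : 0 ≤ β) (hh : 0 ≤ h) (hαh : α * h ≤ 1)
    (hx : x ≤ M) (hS : S ≤ M) (hVM : V ≤ (α - β) * M) :
    (1 - α * h) * x + β * h * S + V * h ≤ M := by
  have hx' : (1 - α * h) * x ≤ (1 - α * h) * M :=
    mul_le_mul_of_nonneg_left hx (sub_nonneg.mpr hαh)
  have hS' : β * h * S ≤ β * h * M := mul_le_mul_of_nonneg_left hS (mul_nonneg hβ hh)
  have hV' : V * h ≤ (α - β) * M * h := mul_le_mul_of_nonneg_right hVM hh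
  linarith

theorem stmt11_general (α β V h : ℝ) (hβ : 0 < β) (hαβ : β < α)
    (hh : 0 < h) (hαh : α * h < 1)
    (a : ℕ → ℝ) (ha : ∀ n, 0 ≤ a n)
    (hrec : ∀ n, a (n + 1) ≤ (1 - α * h) * a n
        + β * h * ((Finset.range (n + 1)).sup' Finset.nonempty_range_add_one a) + V * h) :
    ∀ n, a n ≤ max ((V + β * a 0) / (α - β)) (a 0) := by
  have hVM := le_sub_mul_max_div_sub (V := V) hβ.le hαβ (ha 0)
  intro n
  induction n using Nat.strong_induction_on with
  | _ n ih =>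
    cases n with
    | zero => exact le_max_right _ _
    | succ k =>
      have hpast : (Finset.range (k + 1)).sup' Finset.nonempty_range_add_one a ≤
          max ((V + β * a 0) / (α - β)) (a 0) :=
        Finset.sup'_le _ _ fun i hi => ih i (Finset.mem_range.mp hi)
      exact (hrec k).trans
        (euler_step_le_of_le hβ.le hh.le hαh.le (ih k k.lt_succ_self) hpast hVM)

theorem stmt11 (α β V h : ℝ) (hβ : 0 < β) (hαβ : β < α) (hV : 0 ≤ V)
    (hh : 0 < h) (hαh : α * h < 1)
    (a : ℕ → ℝ) (ha : ∀ n, 0 ≤ a n)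
    (hrec : ∀ n, a (n + 1) ≤ (1 - α * h) * a n
        + β * h * ((Finset.range (n + 1)).sup' Finset.nonempty_range_add_one a) + V * h) :
    ∀ n, a n ≤ max ((V + β * a 0) / (α - β)) (a 0) :=
  stmt11_general α β V h hβ hαβ hh hαh a ha hrec
end
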